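/- arXiv:2509.16851 — 3 statements merged into one kernel-verified Lean document; each statement's English description precedes it below -/
import Mathlib

section
/- Let r ≥ 4 and μ > 0, and suppose α > 0 satisfies α ≤ μ. For sufficiently large n: if G is an n-vertex graph with δ(G) ≥ (1/2 + μ)n such that every vertex subset of size at least αn contains a copy of K_{r-2}, and W ⊆ V(G) has |W| ≤ μn/2, then every vertex v ∈ V(G) \ W lies in a copy of K_r contained in G − W. -/
theorem stmt2 (r : ℕ) (hr : 4 ≤ r) (μ α : ℝ) (hμ : 0 < μ) (hα : 0 < α) (hαμ : α ≤ μ) :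
    ∃ n0 : ℕ, ∀ n ≥ n0, ∀ G : SimpleGraph (Fin n), ∀ _ : DecidableRel G.Adj,
      (∀ v, ((1 : ℝ) / 2 + μ) * n ≤ G.degree v) →
      (∀ S : Finset (Fin n), α * n ≤ S.card → ∃ T ⊆ S, G.IsNClique (r - 2) T) →
      ∀ W : Finset (Fin n), (W.card : ℝ) ≤ μ * n / 2 →
      ∀ v ∉ W, ∃ T : Finset (Fin n), G.IsNClique r T ∧ v ∈ T ∧ Disjoint T W := by
  refine ⟨1, fun n hn G _ hdeg hram W hW v hv => ?_⟩
  have hn1 : (1 : ℝ) ≤ n := by exact_mod_cast hn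
  have hdv : ((1 : ℝ) / 2 + μ) * n ≤ (G.neighborFinset v).card := by
    simpa [SimpleGraph.card_neighborFinset_eq_degree] using hdeg v
  -- N(v) \ W is nonempty
  have hsd : ((G.neighborFinset v).card : ℝ) ≤ ((G.neighborFinset v \ W).card : ℝ) + W.card := by
    exact_mod_cast Finset.card_le_card_sdiff_add_card (s := G.neighborFinset v) (t := W)
  have hne : (G.neighborFinset v \ W).Nonempty := by
    rcases (G.neighborFinset v \ W).eq_empty_or_nonempty with h | h
    · rw [h] at hsd
      simp only [Finset.card_empty, Nat.cast_zero] at hsd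
      nlinarith
    · exact h
  obtain ⟨u, hu⟩ := hne
  rw [Finset.mem_sdiff, SimpleGraph.mem_neighborFinset] at hu
  obtain ⟨hadj, huW⟩ := hu
  have hdu : ((1 : ℝ) / 2 + μ) * n ≤ (G.neighborFinset u).card := by
    simpa [SimpleGraph.card_neighborFinset_eq_degree] using hdeg u
  -- common neighborhood minus W
  set S : Finset (Fin n) := (G.neighborFinset v ∩ G.neighborFinset u) \ W with hS
  have hinter : ((G.neighborFinset v).card : ℝ) + (G.neighborFinset u).card
      ≤ ((G.neighborFinset v ∩ G.neighborFinset u).card : ℝ) + n := by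
    have h1 := Finset.card_inter_add_card_union (G.neighborFinset v) (G.neighborFinset u)
    have h2 : (G.neighborFinset v ∪ G.neighborFinset u).card ≤ n := by
      simpa using Finset.card_le_card (Finset.subset_univ (G.neighborFinset v ∪ G.neighborFinset u))
    have : (G.neighborFinset v).card + (G.neighborFinset u).card
        ≤ (G.neighborFinset v ∩ G.neighborFinset u).card + n := by omega
    exact_mod_cast this
  have hScard : α * n ≤ (S.card : ℝ) := by
    have hsd2 : (((G.neighborFinset v ∩ G.neighborFinset u)).card : ℝ) ≤ (S.card : ℝ) + W.card := by
      exact_mod_cast Finset.card_le_card_sdiff_add_card (s := G.neighborFinset v ∩ G.neighborFinset u) (t := W)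
    nlinarith
  obtain ⟨T, hTS, hT⟩ := hram S hScard
  have hTW : Disjoint T W := Finset.disjoint_left.mpr fun x hx =>
    (Finset.mem_sdiff.mp (hTS hx)).2
  have hTv : ∀ b ∈ T, G.Adj v b := fun b hb => by
    have := (Finset.mem_inter.mp (Finset.mem_sdiff.mp (hTS hb)).1).1
    exact (SimpleGraph.mem_neighborFinset _ _ _).mp this
  have hTu : ∀ b ∈ T, G.Adj u b := fun b hb => by
    have := (Finset.mem_inter.mp (Finset.mem_sdiff.mp (hTS hb)).1).2
    exact (SimpleGraph.mem_neighborFinset _ _ _).mp this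
  have huT : u ∉ T := fun h => G.irrefl (hTu u h)
  have hvT : v ∉ T := fun h => G.irrefl (hTv v h)
  have hclique1 : G.IsNClique (r - 2 + 1) (insert u T) := hT.insert hTu
  have hvin : ∀ b ∈ insert u T, G.Adj v b := by
    intro b hb
    rcases Finset.mem_insert.mp hb with h | h
    · subst h; exact hadj
    · exact hTv b h
  have hclique2 : G.IsNClique (r - 2 + 1 + 1) (insert v (insert u T)) := hclique1.insert hvin
  have hreq : r - 2 + 1 + 1 = r := by omega
  rw [hreq] at hclique2
  refine ⟨insert v (insert u T), hclique2, Finset.mem_insert_self _ _, ?_⟩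
  rw [Finset.insert_eq, Finset.insert_eq, Finset.disjoint_union_left,
    Finset.disjoint_union_left]
  exact ⟨Finset.disjoint_singleton_left.mpr hv,
    Finset.disjoint_singleton_left.mpr huW, hTW⟩
end

section
/- Let R be a multigraph with multiplicity 2 on vertex set V, and let T be a maximal tiling of R by vertex-disjoint copies of K_2^= (a double edge) and K_3 (a triangle of single or double edges). Let B = V \ V(T). Then for every double edge uv in T, no vertex of B is adjacent (by at least one edge) to both u and v; consequently the number of edges between {u,v} and B, counted with multiplicity, is at most 2|B|. -/
/-- A tile in a multigraph with multiplicity 2: either a double edge `K₂⁼`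
or a triangle `K₃` (three vertices pairwise joined by at least one edge). -/
def IsTile {V : Type*} [DecidableEq V] (m : V → V → ℕ) (t : Finset V) : Prop :=
  (∃ u v : V, u ≠ v ∧ t = {u, v} ∧ m u v = 2) ∨
  (∃ u v w : V, u ≠ v ∧ u ≠ w ∧ v ≠ w ∧ t = {u, v, w} ∧
    1 ≤ m u v ∧ 1 ≤ m u w ∧ 1 ≤ m v w)

/-- A `{K₂⁼, K₃}`-tiling: a collection of vertex-disjoint tiles. -/
def IsTiling {V : Type*} [DecidableEq V] (m : V → V → ℕ) (T : Finset (Finset V)) : Prop :=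
  (∀ t ∈ T, IsTile m t) ∧ (T : Set (Finset V)).Pairwise (fun a b => Disjoint a b)

theorem stmt4 {V : Type*} [Fintype V] [DecidableEq V]
    (m : V → V → ℕ) (hsymm : ∀ u v, m u v = m v u) (hloop : ∀ v, m v v = 0)
    (hmult : ∀ u v, m u v ≤ 2)
    (T : Finset (Finset V)) (hT : IsTiling m T)
    (hmax : ∀ T' : Finset (Finset V), IsTiling m T' →
      (T'.biUnion id).card ≤ (T.biUnion id).card)
    (B : Finset V) (hB : B = Finset.univ \ T.biUnion id)
    (u v : V) (huv : u ≠ v) (htile : {u, v} ∈ T) (hdbl : m u v = 2) :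
    (∀ b ∈ B, ¬(1 ≤ m b u ∧ 1 ≤ m b v)) ∧
      (∑ b ∈ B, (m u b + m v b)) ≤ 2 * B.card := by
  have key : ∀ b ∈ B, ¬(1 ≤ m b u ∧ 1 ≤ m b v) := by
    rintro b hb ⟨hbu, hbv⟩
    have hbT : ∀ t ∈ T, b ∉ t := by
      intro t ht hbt
      rw [hB] at hb
      simp only [Finset.mem_sdiff, Finset.mem_biUnion] at hb
      exact hb.2 ⟨t, ht, hbt⟩
    have hbu' : b ≠ u := fun h => hbT _ htile (by simp [h])
    have hbv' : b ≠ v := fun h => hbT _ htile (by simp [h])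
    set T' := insert ({u, v, b} : Finset V) (T.erase {u, v}) with hT'
    have hT'tiling : IsTiling m T' := by
      constructor
      · intro t ht
        rcases Finset.mem_insert.mp ht with h | h
        · subst h
          right
          refine ⟨u, v, b, huv, Ne.symm hbu', Ne.symm hbv', rfl, by omega, ?_, ?_⟩
          · rw [hsymm]; exact hbu
          · rw [hsymm]; exact hbv
        · exact hT.1 _ (Finset.mem_of_mem_erase h)
      · intro a ha c hc hac
        simp only [hT', Finset.coe_insert, Set.mem_insert_iff, Finset.mem_coe,
          Finset.mem_erase] at ha hc
        have dstep : ∀ c : Finset V, c ≠ {u, v} → c ∈ T →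
            Disjoint ({u, v, b} : Finset V) c := by
          intro c hc1 hc2
          have hd : Disjoint ({u, v} : Finset V) c :=
            hT.2 htile hc2 (fun h => hc1 h.symm)
          rw [Finset.disjoint_left]
          intro x hx hxc
          simp only [Finset.mem_insert, Finset.mem_singleton] at hx
          rcases hx with rfl | rfl | rfl
          · exact Finset.disjoint_left.mp hd (by simp) hxc
          · exact Finset.disjoint_left.mp hd (by simp) hxc
          · exact hbT _ hc2 hxc
        rcases ha with rfl | ⟨ha1, ha2⟩
        · rcases hc with rfl | ⟨hc1, hc2⟩
          · exact absurd rfl hac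
          · exact dstep c hc1 hc2
        · rcases hc with rfl | ⟨hc1, hc2⟩
          · exact (dstep a ha1 ha2).symm
          · exact hT.2 ha2 hc2 hac
    have hsub : T.biUnion id ⊆ T'.biUnion id := by
      intro x hx
      rw [Finset.mem_biUnion] at hx ⊢
      obtain ⟨t, htT, hxt⟩ := hx
      by_cases h : t = {u, v}
      · refine ⟨{u, v, b}, Finset.mem_insert_self _ _, ?_⟩
        subst h
        simp only [id, Finset.mem_insert, Finset.mem_singleton] at hxt ⊢
        tauto
      · exact ⟨t, Finset.mem_insert_of_mem (Finset.mem_erase.mpr ⟨h, htT⟩), hxt⟩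
    have hbmem : b ∈ T'.biUnion id :=
      Finset.mem_biUnion.mpr ⟨{u, v, b}, Finset.mem_insert_self _ _, by simp⟩
    have hbnot : b ∉ T.biUnion id := by
      rw [hB] at hb
      exact (Finset.mem_sdiff.mp hb).2
    have hlt : (T.biUnion id).card < (T'.biUnion id).card :=
      Finset.card_lt_card ((Finset.ssubset_iff_of_subset hsub).mpr ⟨b, hbmem, hbnot⟩)
    exact absurd (hmax T' hT'tiling) (by omega)
  refine ⟨key, ?_⟩
  calc ∑ b ∈ B, (m u b + m v b) ≤ ∑ _b ∈ B, 2 := by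
        refine Finset.sum_le_sum fun b hb => ?_
        have h := key b hb
        have h1 := hsymm b u
        have h2 := hsymm b v
        have h3 := hmult u b
        have h4 := hmult v b
        omega
    _ = 2 * B.card := by rw [Finset.sum_const]; ring
end

section
/- Let R be a multigraph with multiplicity 2 on k vertices such that every vertex has degree (counting double edges twice) at least (1 + μ)k, where 0 < μ < 1. Then for sufficiently large k, R contains a collection of vertex-disjoint copies of K_2^= (double edges) and K_3 (triangles) covering all but fewer than 1/μ vertices. -/
/-!
Take a tiling `T` covering as many vertices as possible and let `U` be the set of uncovered
vertices. Maximality forbids local exchanges: `U` spans no double edge; a vertex of `U` is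
joined to at most one end of a double-edge tile (otherwise they form a triangle); and at most
one vertex of `U` sends multiplicity at least 4 into a triangle tile (otherwise two double
edges, or a double edge and a new triangle, replace it). So a vertex of `U` has degree at most
`|U| - 1` inside `U`, and `U` sends at most `|t| (|U| + 1)` into each tile `t`. Summing degrees
over `U` gives `|U| (1 + μ) k + |U| ≤ |U|² + (k - |U|) (|U| + 1)`, that is
`μ |U| k + 2 |U| ≤ k`, whence `μ |U| < 1` for every `k`.
-/

open Finset

theorem Finset.sum_le_mul_card_add_one {α : Type*} {s : Finset α} {f : α → ℕ} {c : ℕ}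
    (hf : ∀ x ∈ s, f x ≤ 2 * c)
    (hone : ∀ x ∈ s, ∀ y ∈ s, c < f x → c < f y → x = y) :
    ∑ x ∈ s, f x ≤ c * (s.card + 1) := by
  have hbig : (s.filter (c < f ·)).card ≤ 1 :=
    card_le_one.2 fun x hx y hy => hone x (mem_filter.1 hx).1 y (mem_filter.1 hy).1
      (mem_filter.1 hx).2 (mem_filter.1 hy).2
  calc ∑ x ∈ s, f x ≤ ∑ x ∈ s, (c + if c < f x then c else 0) :=
        sum_le_sum fun x hx => by have := hf x hx; split_ifs <;> omega
    _ = c * s.card + c * (s.filter (c < f ·)).card := by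
        rw [sum_add_distrib, ← sum_filter, sum_const, sum_const, smul_eq_mul, smul_eq_mul,
          mul_comm, mul_comm _ c]
    _ ≤ c * (s.card + 1) := by rw [mul_add]; gcongr

variable {V : Type*} [DecidableEq V] {m : V → V → ℕ}

theorem IsTile.card_le_three {t : Finset V} (ht : IsTile m t) : t.card ≤ 3 := by
  rcases ht with ⟨a, b, -, rfl, -⟩ | ⟨a, b, c, -, -, -, rfl, -⟩
  · exact card_le_two.trans (by norm_num)
  · exact Finset.card_le_three

namespace IsTiling

variable {S T : Finset (Finset V)}

theorem mono (hT : IsTiling m T) (hST : S ⊆ T) : IsTiling m S :=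
  ⟨fun t ht => hT.1 t (hST ht), hT.2.mono (coe_subset.2 hST)⟩

theorem card_biUnion (hT : IsTiling m T) : (T.biUnion id).card = ∑ t ∈ T, t.card :=
  Finset.card_biUnion hT.2

theorem union (hS : IsTiling m S) (hT : IsTiling m T)
    (hST : Disjoint (S.biUnion id) (T.biUnion id)) : IsTiling m (S ∪ T) := by
  refine ⟨fun t ht => (mem_union.1 ht).elim (hS.1 t) (hT.1 t), ?_⟩
  rw [coe_union, Set.pairwise_union_of_symm]
  exact ⟨hS.2, hT.2, fun s hs t ht _ =>
    hST.mono (subset_biUnion_of_mem id hs) (subset_biUnion_of_mem id ht)⟩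

theorem singleton {s : Finset V} (hs : IsTile m s) : IsTiling m {s} :=
  ⟨by simp [hs], by simp⟩

theorem pair {s t : Finset V} (hs : IsTile m s) (ht : IsTile m t) (hst : Disjoint s t) :
    IsTiling m {s, t} := by
  refine ⟨by simp [hs, ht], ?_⟩
  rw [coe_pair, Set.pairwise_insert_of_symm]
  simpa using fun _ => hst

end IsTiling

theorem ne_of_mem_of_notMem_biUnion {T : Finset (Finset V)} {t : Finset V} {x v : V}
    (ht : t ∈ T) (hv : v ∈ t) (hx : x ∉ T.biUnion id) : x ≠ v :=
  fun h => hx (mem_biUnion.2 ⟨t, ht, h ▸ hv⟩)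

def IsMaxTiling (m : V → V → ℕ) (T : Finset (Finset V)) : Prop :=
  IsTiling m T ∧ ∀ T', IsTiling m T' → (T'.biUnion id).card ≤ (T.biUnion id).card

theorem exists_isMaxTiling [Fintype V] (m : V → V → ℕ) : ∃ T, IsMaxTiling m T := by
  classical
  obtain ⟨T, hT, hmax⟩ := exists_max_image {T : Finset (Finset V) | IsTiling m T}
    (fun T => (T.biUnion id).card) ⟨∅, mem_filter.2 ⟨mem_univ _, by simp, by simp⟩⟩
  exact ⟨T, (mem_filter.1 hT).2, fun T' hT' => hmax T' (by simpa using hT')⟩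

namespace IsMaxTiling

variable {T : Finset (Finset V)} {x y : V}

theorem card_biUnion_le_of_exchange (hT : IsMaxTiling m T) {R S : Finset (Finset V)}
    (hR : R ⊆ T) (hS : IsTiling m S)
    (hSR : ∀ v ∈ S.biUnion id, v ∈ R.biUnion id ∨ v ∉ T.biUnion id) :
    (S.biUnion id).card ≤ (R.biUnion id).card := by
  have hRest : IsTiling m (T \ R) := hT.1.mono sdiff_subset
  have hdisj : Disjoint (S.biUnion id) ((T \ R).biUnion id) := by
    rw [disjoint_left]
    intro v hvS hvT
    obtain ⟨b, hb, hvb⟩ := mem_biUnion.1 hvT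
    rcases hSR v hvS with hvR | hvC
    · obtain ⟨a, ha, hva⟩ := mem_biUnion.1 hvR
      have hab : a ≠ b := fun h => (mem_sdiff.1 hb).2 (h ▸ ha)
      exact disjoint_left.1 (hT.1.2 (hR ha) (mem_sdiff.1 hb).1 hab) hva hvb
    · exact hvC (mem_biUnion.2 ⟨b, (mem_sdiff.1 hb).1, hvb⟩)
  have hle := hT.2 _ (hS.union hRest hdisj)
  rw [union_biUnion, card_union_of_disjoint hdisj, hRest.card_biUnion, hT.1.card_biUnion,
    ← sum_sdiff hR] at hle
  rw [(hT.1.mono hR).card_biUnion]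
  omega

theorem ne_two_of_notMem (hT : IsMaxTiling m T) (hx : x ∉ T.biUnion id)
    (hy : y ∉ T.biUnion id) (hxy : x ≠ y) : m x y ≠ 2 := by
  intro h
  have := hT.card_biUnion_le_of_exchange (empty_subset T)
    (IsTiling.singleton (Or.inl ⟨x, y, hxy, rfl, h⟩))
    (by simp only [singleton_biUnion, id, mem_insert, mem_singleton, forall_eq_or_imp, forall_eq]
        simp [hx, hy])
  simp [card_pair hxy] at this

theorem eq_zero_or_eq_zero_of_pair_mem (hT : IsMaxTiling m T) {a b : V} (ht : {a, b} ∈ T)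
    (hab : a ≠ b) (hmab : 1 ≤ m a b) (hx : x ∉ T.biUnion id) : m x a = 0 ∨ m x b = 0 := by
  by_contra! h
  have hxa := ne_of_mem_of_notMem_biUnion (v := a) ht (by simp) hx
  have hxb := ne_of_mem_of_notMem_biUnion (v := b) ht (by simp) hx
  have := hT.card_biUnion_le_of_exchange (singleton_subset_iff.2 ht)
    (IsTiling.singleton (Or.inr ⟨x, a, b, hxa, hxb, hab, rfl, by omega, by omega, hmab⟩))
    (by simp only [singleton_biUnion, id, mem_insert, mem_singleton, forall_eq_or_imp, forall_eq]
        simp [hx])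
  simp only [singleton_biUnion, id] at this
  rw [card_eq_three.2 ⟨x, a, b, hxa, hxb, hab, rfl⟩, card_pair hab] at this
  omega

theorem eq_of_eq_two_of_eq_two (hT : IsMaxTiling m T) {t : Finset V} (ht : t ∈ T) {p q : V}
    (hp : p ∈ t) (hq : q ∈ t) (hx : x ∉ T.biUnion id) (hy : y ∉ T.biUnion id)
    (hxy : x ≠ y) (hxp : m x p = 2) (hyq : m y q = 2) : p = q := by
  by_contra hpq
  have hxp' := ne_of_mem_of_notMem_biUnion ht hp hx
  have hxq' := ne_of_mem_of_notMem_biUnion ht hq hx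
  have hyp' := ne_of_mem_of_notMem_biUnion ht hp hy
  have hyq' := ne_of_mem_of_notMem_biUnion ht hq hy
  have hdisj : Disjoint ({x, p} : Finset V) {y, q} := by
    simp only [disjoint_insert_left, disjoint_singleton_left, mem_insert, mem_singleton]
    grind
  have := hT.card_biUnion_le_of_exchange (singleton_subset_iff.2 ht)
    (IsTiling.pair (Or.inl ⟨x, p, hxp', rfl, hxp⟩) (Or.inl ⟨y, q, hyq', rfl, hyq⟩) hdisj)
    (by simp only [biUnion_insert, singleton_biUnion, id, mem_union, mem_insert, mem_singleton]
        rintro v ((rfl | rfl) | (rfl | rfl)) <;> simp [*])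
  simp only [biUnion_insert, singleton_biUnion, id] at this
  rw [card_union_of_disjoint hdisj, card_pair hxp', card_pair hyq'] at this
  have := (hT.1.1 t ht).card_le_three
  omega

theorem eq_zero_or_eq_zero_of_triple_mem (hT : IsMaxTiling m T) {p b c : V}
    (ht : {p, b, c} ∈ T) (hpb : p ≠ b) (hpc : p ≠ c) (hbc : b ≠ c) (hmbc : 1 ≤ m b c)
    (hx : x ∉ T.biUnion id) (hy : y ∉ T.biUnion id) (hxy : x ≠ y) (hxp : m x p = 2) :
    m y b = 0 ∨ m y c = 0 := by
  by_contra! h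
  have hxp' := ne_of_mem_of_notMem_biUnion (v := p) ht (by simp) hx
  have hxb' := ne_of_mem_of_notMem_biUnion (v := b) ht (by simp) hx
  have hxc' := ne_of_mem_of_notMem_biUnion (v := c) ht (by simp) hx
  have hyp' := ne_of_mem_of_notMem_biUnion (v := p) ht (by simp) hy
  have hyb' := ne_of_mem_of_notMem_biUnion (v := b) ht (by simp) hy
  have hyc' := ne_of_mem_of_notMem_biUnion (v := c) ht (by simp) hy
  have hdisj : Disjoint ({x, p} : Finset V) {y, b, c} := by
    simp only [disjoint_insert_left, disjoint_singleton_left, mem_insert, mem_singleton]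
    grind
  have := hT.card_biUnion_le_of_exchange (singleton_subset_iff.2 ht)
    (IsTiling.pair (Or.inl ⟨x, p, hxp', rfl, hxp⟩)
      (Or.inr ⟨y, b, c, hyb', hyc', hbc, rfl, by omega, by omega, hmbc⟩) hdisj)
    (by simp only [biUnion_insert, singleton_biUnion, id, mem_union, mem_insert, mem_singleton]
        rintro v ((rfl | rfl) | (rfl | rfl | rfl)) <;> simp [*])
  simp only [biUnion_insert, singleton_biUnion, id] at this
  rw [card_union_of_disjoint hdisj, card_pair hxp',
    card_eq_three.2 ⟨y, b, c, hyb', hyc', hbc, rfl⟩] at this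
  have := (hT.1.1 _ ht).card_le_three
  omega

/-- If `x` and `y` have double edges to distinct vertices of `t`, two `K₂⁼` replace `t`;
otherwise both go to the same `p`, and `y` forms a triangle with the other two vertices. -/
theorem eq_of_four_le_sum (hT : IsMaxTiling m T) (hle : ∀ u v, m u v ≤ 2) {t : Finset V}
    (ht : t ∈ T) (ht3 : t.card = 3) (hadj : ∀ u ∈ t, ∀ v ∈ t, u ≠ v → 1 ≤ m u v)
    (hx : x ∉ T.biUnion id) (hy : y ∉ T.biUnion id)
    (hx4 : 4 ≤ ∑ v ∈ t, m x v) (hy4 : 4 ≤ ∑ v ∈ t, m y v) : x = y := by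
  by_contra hxy
  obtain ⟨p, hp, hxp⟩ : ∃ p ∈ t, m x p = 2 := by
    obtain ⟨p, hp, h⟩ := exists_lt_of_sum_lt (f := fun _ => 1) (g := m x) (s := t)
      (by simp only [sum_const, smul_eq_mul, mul_one, ht3]; omega)
    exact ⟨p, hp, by have := hle x p; omega⟩
  obtain ⟨b, c, hbc, hpbc⟩ :=
    card_eq_two.1 (by rw [card_erase_of_mem hp, ht3] : (t.erase p).card = 2)
  obtain ⟨hbp, hb⟩ := mem_erase.1 (by simp [hpbc] : b ∈ t.erase p)
  obtain ⟨hcp, hc⟩ := mem_erase.1 (by simp [hpbc] : c ∈ t.erase p)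
  have htpbc : t = {p, b, c} := by rw [← insert_erase hp, hpbc]
  have hyb : m y b ≠ 2 := fun h => hbp (hT.eq_of_eq_two_of_eq_two ht hp hb hx hy hxy hxp h).symm
  have hyc : m y c ≠ 2 := fun h => hcp (hT.eq_of_eq_two_of_eq_two ht hp hc hx hy hxy hxp h).symm
  rw [htpbc, sum_insert (by simp [hbp.symm, hcp.symm]), sum_pair hbc] at hy4
  have := hle y p; have := hle y b; have := hle y c
  rcases hT.eq_zero_or_eq_zero_of_triple_mem (htpbc ▸ ht) hbp.symm hcp.symm hbc
    (hadj b hb c hc hbc) hx hy hxy hxp with h | h <;> omega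

variable [Fintype V]

theorem sum_sum_le_of_mem (hT : IsMaxTiling m T) (hsym : ∀ u v, m u v = m v u)
    (hle : ∀ u v, m u v ≤ 2) {t : Finset V} (ht : t ∈ T) :
    ∑ x ∈ (T.biUnion id)ᶜ, ∑ v ∈ t, m x v ≤ t.card * ((T.biUnion id)ᶜ.card + 1) := by
  rcases hT.1.1 t ht with ⟨a, b, hab, rfl, hmab⟩ | ⟨a, b, c, hab, hac, hbc, rfl, e1, e2, e3⟩
  · rw [card_pair hab]
    refine sum_le_mul_card_add_one (fun x _ => ?_) (fun x hx y _ hx3 _ => ?_)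
    · rw [sum_pair hab]; have := hle x a; have := hle x b; omega
    · rw [sum_pair hab] at hx3
      have := hle x a; have := hle x b
      rcases hT.eq_zero_or_eq_zero_of_pair_mem ht hab (by omega) (mem_compl.1 hx) with h | h <;>
        omega
  · have ht3 : ({a, b, c} : Finset V).card = 3 := card_eq_three.2 ⟨a, b, c, hab, hac, hbc, rfl⟩
    have hadj : ∀ u ∈ ({a, b, c} : Finset V), ∀ v ∈ ({a, b, c} : Finset V), u ≠ v →
        1 ≤ m u v := by
      simp only [mem_insert, mem_singleton]
      rintro u (rfl | rfl | rfl) v (rfl | rfl | rfl) huv <;> grind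
    rw [ht3]
    refine sum_le_mul_card_add_one (fun x _ => ?_) (fun x hx y hy hx3 hy3 => ?_)
    · rw [sum_insert (by simp [hab, hac]), sum_pair hbc]
      have := hle x a; have := hle x b; have := hle x c; omega
    · exact hT.eq_of_four_le_sum hle ht ht3 hadj (mem_compl.1 hx) (mem_compl.1 hy) hx3 hy3

theorem sum_compl_add_one_le (hT : IsMaxTiling m T) (hdiag : ∀ v, m v v = 0)
    (hle : ∀ u v, m u v ≤ 2) {x : V} (hx : x ∈ (T.biUnion id)ᶜ) :
    ∑ v ∈ (T.biUnion id)ᶜ, m x v + 1 ≤ (T.biUnion id)ᶜ.card := by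
  set U := (T.biUnion id)ᶜ
  have hle1 : ∑ v ∈ U.erase x, m x v ≤ (U.erase x).card • 1 :=
    sum_le_card_nsmul _ _ _ fun v hv => by
      have := hT.ne_two_of_notMem (mem_compl.1 hx) (mem_compl.1 (mem_of_mem_erase hv))
        (ne_of_mem_erase hv).symm
      have := hle x v
      omega
  rw [card_erase_of_mem hx, smul_eq_mul, mul_one] at hle1
  rw [← sum_erase _ (hdiag x)]
  have := card_pos.2 ⟨x, hx⟩
  omega

theorem sum_degree_compl_add_card_le (hT : IsMaxTiling m T) (hsym : ∀ u v, m u v = m v u)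
    (hdiag : ∀ v, m v v = 0) (hle : ∀ u v, m u v ≤ 2) :
    ∑ x ∈ (T.biUnion id)ᶜ, ∑ v, m x v + (T.biUnion id)ᶜ.card ≤
      (T.biUnion id)ᶜ.card * (T.biUnion id)ᶜ.card +
        (T.biUnion id).card * ((T.biUnion id)ᶜ.card + 1) := by
  set U := (T.biUnion id)ᶜ
  have hsplit (x : V) : ∑ v, m x v = ∑ v ∈ U, m x v + ∑ t ∈ T, ∑ v ∈ t, m x v := by
    rw [← sum_compl_add_sum (T.biUnion id)]; exact congrArg _ (sum_biUnion hT.1.2)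
  calc ∑ x ∈ U, ∑ v, m x v + U.card
        = ∑ x ∈ U, (∑ v ∈ U, m x v + 1) + ∑ t ∈ T, ∑ x ∈ U, ∑ v ∈ t, m x v := by
          simp only [hsplit, sum_add_distrib, sum_const, smul_eq_mul, mul_one]
          rw [sum_comm (s := U) (t := T)]; ring
    _ ≤ ∑ _x ∈ U, U.card + ∑ t ∈ T, t.card * (U.card + 1) :=
          add_le_add (sum_le_sum fun x hx => hT.sum_compl_add_one_le hdiag hle hx)
            (sum_le_sum fun t ht => hT.sum_sum_le_of_mem hsym hle ht)
    _ = U.card * U.card + (T.biUnion id).card * (U.card + 1) := by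
          rw [sum_const, smul_eq_mul, ← sum_mul, hT.1.card_biUnion]

theorem mul_card_compl_lt_one (hT : IsMaxTiling m T) (hsym : ∀ u v, m u v = m v u)
    (hdiag : ∀ v, m v v = 0) (hle : ∀ u v, m u v ≤ 2) {μ : ℝ}
    (hdeg : ∀ v, (1 + μ) * Fintype.card V ≤ ((∑ u, m v u : ℕ) : ℝ)) :
    μ * (T.biUnion id)ᶜ.card < 1 := by
  set U := (T.biUnion id)ᶜ
  have hcard : (U.card : ℝ) + (T.biUnion id).card = Fintype.card V := by
    exact_mod_cast card_compl_add_card _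
  have hupper : ((∑ x ∈ U, ∑ v, m x v : ℕ) : ℝ) + U.card ≤
      U.card * U.card + (T.biUnion id).card * (U.card + 1) := by
    exact_mod_cast hT.sum_degree_compl_add_card_le hsym hdiag hle
  have hlower := card_nsmul_le_sum U (fun x => ((∑ v, m x v : ℕ) : ℝ)) _ fun x _ => hdeg x
  rw [nsmul_eq_mul, ← Nat.cast_sum] at hlower
  rcases U.eq_empty_or_nonempty with hU | hU
  · simp [hU]
  · have hU1 : (1 : ℝ) ≤ U.card := by exact_mod_cast card_pos.2 hU
    nlinarith

end IsMaxTiling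

theorem stmt5_general (μ : ℝ) (hμ0 : 0 < μ) :
    ∃ k0 : ℕ, ∀ k ≥ k0, ∀ m : Fin k → Fin k → ℕ,
      (∀ u v, m u v = m v u) → (∀ v, m v v = 0) → (∀ u v, m u v ≤ 2) →
      (∀ v, (1 + μ) * k ≤ ((∑ u, m v u : ℕ) : ℝ)) →
      ∃ T : Finset (Finset (Fin k)), IsTiling m T ∧
        ((k : ℝ) - ((T.biUnion id).card : ℝ)) < 1 / μ := by
  refine ⟨0, fun k _ m hsym hdiag hle hdeg => ?_⟩
  obtain ⟨T, hT⟩ := exists_isMaxTiling m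
  refine ⟨T, hT.1, ?_⟩
  have hlt := hT.mul_card_compl_lt_one hsym hdiag hle (by simpa using hdeg)
  have hcard : ((T.biUnion id)ᶜ.card : ℝ) = k - (T.biUnion id).card := by
    rw [eq_sub_iff_add_eq]
    exact_mod_cast (card_compl_add_card _).trans (Fintype.card_fin k)
  rw [← hcard, lt_div_iff₀ hμ0]
  linarith

theorem stmt5 (μ : ℝ) (hμ0 : 0 < μ) (hμ1 : μ < 1) :
    ∃ k0 : ℕ, ∀ k ≥ k0, ∀ m : Fin k → Fin k → ℕ,
      (∀ u v, m u v = m v u) → (∀ v, m v v = 0) → (∀ u v, m u v ≤ 2) →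
      (∀ v, (1 + μ) * k ≤ ((∑ u, m v u : ℕ) : ℝ)) →
      ∃ T : Finset (Finset (Fin k)), IsTiling m T ∧
        ((k : ℝ) - ((T.biUnion id).card : ℝ)) < 1 / μ :=
  stmt5_general μ hμ0
end
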